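/- Let 𝒱 be a category with functors [-,-] : 𝒱^op × 𝒱 → 𝒱 and -⊗- : 𝒱 × 𝒱 → 𝒱, an object I, and a natural isomorphism π : 𝒱(A⊗B,C) ≅ 𝒱(A,[B,C]). Then natural transformations r : A → A⊗I are in bijection with natural transformations i : [I,B] → B, the correspondence being uniquely determined by the requirement that 𝒱(1_A, i_B) ∘ π = 𝒱(r_A, 1_B) : 𝒱(A⊗I,B) → 𝒱(A,B) for all A and B. -/

import Mathlib

open CategoryTheory

universe v u w

/-- A left skew-closed category structure on a category `V` (Street, "Skew-closed categories"). -/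
structure SkewClosedStruct (V : Type u) [Category.{v} V] where
  ihom : V → V → V
  imap : ∀ {A A' B B' : V}, (A' ⟶ A) → (B ⟶ B') → (ihom A B ⟶ ihom A' B')
  imap_id : ∀ (A B : V), imap (𝟙 A) (𝟙 B) = 𝟙 (ihom A B)
  imap_comp : ∀ {A A' A'' B B' B'' : V} (f : A' ⟶ A) (f' : A'' ⟶ A') (g : B ⟶ B') (g' : B' ⟶ B''),
      imap (f' ≫ f) (g ≫ g') = imap f g ≫ imap f' g'
  unit : V
  i : ∀ A : V, ihom unit A ⟶ A
  i_natural : ∀ {A B : V} (f : A ⟶ B), imap (𝟙 unit) f ≫ i B = i A ≫ f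
  j : ∀ A : V, unit ⟶ ihom A A
  j_natural : ∀ {A B : V} (f : A ⟶ B), j A ≫ imap (𝟙 A) f = j B ≫ imap f (𝟙 B)
  L : ∀ A B C : V, ihom B C ⟶ ihom (ihom A B) (ihom A C)
  L_natural : ∀ {B B' C C' : V} (A : V) (f : B' ⟶ B) (g : C ⟶ C'),
      imap f g ≫ L A B' C' = L A B C ≫ imap (imap (𝟙 A) f) (imap (𝟙 A) g)
  L_extranatural : ∀ {A A' : V} (h : A' ⟶ A) (B C : V),
      L A B C ≫ imap (𝟙 (ihom A B)) (imap h (𝟙 C))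
        = L A' B C ≫ imap (imap h (𝟙 B)) (𝟙 (ihom A' C))
  SCC1 : ∀ A B C D : V,
      L A C D ≫ L (ihom A B) (ihom A C) (ihom A D) ≫
          imap (L A B C) (𝟙 (ihom (ihom A B) (ihom A D)))
        = L B C D ≫ imap (𝟙 (ihom B C)) (L A B D)
  SCC2 : ∀ A C : V, L A A C ≫ imap (j A) (𝟙 (ihom A C)) ≫ i (ihom A C) = 𝟙 (ihom A C)
  SCC3 : ∀ A B : V, j B ≫ L A B B = j (ihom A B)
  SCC4 : ∀ B C : V, L unit B C ≫ imap (𝟙 (ihom unit B)) (i C) = imap (i B) (𝟙 C)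
  SCC5 : j unit ≫ i unit = 𝟙 unit

/-- The data of a functor `𝒱ᵒᵖ × 𝒱 ⟶ 𝒱` (an internal-hom candidate). -/
structure HomData (C : Type u) [Category.{v} C] where
  obj : C → C → C
  map : ∀ {A A' B B' : C}, (A' ⟶ A) → (B ⟶ B') → (obj A B ⟶ obj A' B')
  map_id : ∀ (A B : C), map (𝟙 A) (𝟙 B) = 𝟙 (obj A B)
  map_comp : ∀ {A A' A'' B B' B'' : C} (f : A' ⟶ A) (f' : A'' ⟶ A') (g : B ⟶ B')
      (g' : B' ⟶ B''), map (f' ≫ f) (g ≫ g') = map f g ≫ map f' g'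

/-- The data of a functor `𝒱 × 𝒱 ⟶ 𝒱` (a tensor-product candidate). -/
structure TenData (C : Type u) [Category.{v} C] where
  obj : C → C → C
  map : ∀ {A A' B B' : C}, (A ⟶ A') → (B ⟶ B') → (obj A B ⟶ obj A' B')
  map_id : ∀ (A B : C), map (𝟙 A) (𝟙 B) = 𝟙 (obj A B)
  map_comp : ∀ {A A' A'' B B' B'' : C} (f : A ⟶ A') (f' : A' ⟶ A'') (g : B ⟶ B')
      (g' : B' ⟶ B''), map (f ≫ f') (g ≫ g') = map f g ≫ map f' g'

section Adjunction

variable {C : Type u} [Category.{v} C] (T : TenData C) (E : HomData C)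
variable (π : ∀ A B D : C, (T.obj A B ⟶ D) ≃ (A ⟶ E.obj B D))

/-- The counit (evaluation) `e = π⁻¹(1) : [B,D] ⊗ B ⟶ D` of the tensor-hom adjunction. -/
def adjE (B D : C) : T.obj (E.obj B D) B ⟶ D := (π (E.obj B D) B D).symm (𝟙 (E.obj B D))

/-- The unit `d = π(1) : A ⟶ [B, A ⊗ B]` of the tensor-hom adjunction. -/
def adjD (A B : C) : A ⟶ E.obj B (T.obj A B) := π A B (T.obj A B) (𝟙 (T.obj A B))

end Adjunction

/-! Yoneda for the adjunction `- ⊗ I ⊣ [I, -]`: a natural `r : 1 ⟶ - ⊗ I` and a natural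
`i : [I, -] ⟶ 1` are mates, `i_B = e_{I,B} ∘ r_{[I,B]}` and `r_A = i_{A⊗I} ∘ d_{A,I}`, and the
condition `i_B ∘ π k = k ∘ r_A` for all `k` already pins each one down from the other
(take `k = e` resp. `k = 1`). -/

section Mates

variable {C : Type u} [Category.{v} C] {T : TenData C} {E : HomData C}
  {π : ∀ A B D : C, (T.obj A B ⟶ D) ≃ (A ⟶ E.obj B D)}

def HomEquivNatural (T : TenData C) (E : HomData C)
    (π : ∀ A B D : C, (T.obj A B ⟶ D) ≃ (A ⟶ E.obj B D)) : Prop :=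
  ∀ {A A' B B' D D' : C} (f : A' ⟶ A) (g : B' ⟶ B) (h : D ⟶ D') (k : T.obj A B ⟶ D),
    π A' B' D' (T.map f g ≫ k ≫ h) = f ≫ π A B D k ≫ E.map g h

def IsNatRightUnit (T : TenData C) (I : C) (r : ∀ A : C, A ⟶ T.obj A I) : Prop :=
  ∀ {A B : C} (f : A ⟶ B), f ≫ r B = r A ≫ T.map f (𝟙 I)

def IsNatHomUnit (E : HomData C) (I : C) (i : ∀ B : C, E.obj I B ⟶ B) : Prop :=
  ∀ {A B : C} (f : A ⟶ B), E.map (𝟙 I) f ≫ i B = i A ≫ f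

def AreMates (π : ∀ A B D : C, (T.obj A B ⟶ D) ≃ (A ⟶ E.obj B D)) (I : C)
    (r : ∀ A : C, A ⟶ T.obj A I) (i : ∀ B : C, E.obj I B ⟶ B) : Prop :=
  ∀ (A B : C) (k : T.obj A I ⟶ B), π A I B k ≫ i B = r A ≫ k

@[simp]
theorem homEquiv_adjE (B D : C) : π (E.obj B D) B D (adjE T E π B D) = 𝟙 _ :=
  Equiv.apply_symm_apply _ _

theorem AreMates.eq_comp_adjE {I : C} {r : ∀ A : C, A ⟶ T.obj A I}
    {i : ∀ B : C, E.obj I B ⟶ B} (h : AreMates π I r i) (B : C) :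
    i B = r (E.obj I B) ≫ adjE T E π I B := by
  simpa using h _ _ (adjE T E π I B)

theorem AreMates.eq_adjD_comp {I : C} {r : ∀ A : C, A ⟶ T.obj A I}
    {i : ∀ B : C, E.obj I B ⟶ B} (h : AreMates π I r i) (A : C) :
    r A = adjD T E π A I ≫ i (T.obj A I) := by
  simpa [adjD] using (h A _ (𝟙 _)).symm

variable (hπ : HomEquivNatural T E π)
include hπ

theorem homEquiv_comp {A B D D' : C} (k : T.obj A B ⟶ D) (h : D ⟶ D') :
    π A B D' (k ≫ h) = π A B D k ≫ E.map (𝟙 B) h := by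
  simpa [T.map_id] using hπ (𝟙 A) (𝟙 B) h k

theorem homEquiv_map_comp {A A' B D : C} (f : A' ⟶ A) (k : T.obj A B ⟶ D) :
    π A' B D (T.map f (𝟙 B) ≫ k) = f ≫ π A B D k := by
  simpa [E.map_id] using hπ f (𝟙 B) (𝟙 D) k

theorem homEquiv_eq_adjD_comp {A B D : C} (k : T.obj A B ⟶ D) :
    π A B D k = adjD T E π A B ≫ E.map (𝟙 B) k := by
  simpa [adjD] using homEquiv_comp hπ (𝟙 _) k

theorem homEquiv_symm_eq_map_comp_adjE {A B D : C} (g : A ⟶ E.obj B D) :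
    (π A B D).symm g = T.map g (𝟙 B) ≫ adjE T E π B D := by
  rw [Equiv.symm_apply_eq, homEquiv_map_comp hπ, homEquiv_adjE, Category.comp_id]

theorem comp_adjD {A A' B : C} (f : A' ⟶ A) :
    f ≫ adjD T E π A B = adjD T E π A' B ≫ E.map (𝟙 B) (T.map f (𝟙 B)) := by
  rw [← homEquiv_eq_adjD_comp hπ, adjD, ← homEquiv_map_comp hπ, Category.comp_id]

theorem map_map_comp_adjE {B D D' : C} (f : D ⟶ D') :
    T.map (E.map (𝟙 B) f) (𝟙 B) ≫ adjE T E π B D' = adjE T E π B D ≫ f := by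
  rw [← homEquiv_symm_eq_map_comp_adjE hπ, Equiv.symm_apply_eq, homEquiv_comp hπ,
    homEquiv_adjE, Category.id_comp]

theorem areMates_comp_adjE {I : C} {r : ∀ A : C, A ⟶ T.obj A I} (hr : IsNatRightUnit T I r) :
    AreMates π I r fun B => r (E.obj I B) ≫ adjE T E π I B := by
  intro A B k
  rw [reassoc_of% hr, ← homEquiv_symm_eq_map_comp_adjE hπ, Equiv.symm_apply_apply]

theorem isNatHomUnit_comp_adjE {I : C} {r : ∀ A : C, A ⟶ T.obj A I}
    (hr : IsNatRightUnit T I r) : IsNatHomUnit E I fun B => r (E.obj I B) ≫ adjE T E π I B := by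
  intro A B f
  rw [reassoc_of% hr, map_map_comp_adjE hπ, Category.assoc]

theorem areMates_adjD_comp {I : C} {i : ∀ B : C, E.obj I B ⟶ B} (hi : IsNatHomUnit E I i) :
    AreMates π I (fun A => adjD T E π A I ≫ i (T.obj A I)) i := by
  intro A B k
  rw [homEquiv_eq_adjD_comp hπ, Category.assoc, hi, Category.assoc]

theorem isNatRightUnit_adjD_comp {I : C} {i : ∀ B : C, E.obj I B ⟶ B}
    (hi : IsNatHomUnit E I i) : IsNatRightUnit T I fun A => adjD T E π A I ≫ i (T.obj A I) := by
  intro A B f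
  rw [reassoc_of% comp_adjD hπ, hi, Category.assoc]

end Mates

/-- (Street, "Skew-closed categories", §7, diagram (31).)
Given a category `𝒱` with functors `[-,-]` and `⊗`, an object `I`, and a natural
isomorphism `π : 𝒱(A⊗B,C) ≅ 𝒱(A,[B,C])`, natural transformations `r : A ⟶ A⊗I` are
in bijection with natural transformations `i : [I,B] ⟶ B`, the correspondence being
uniquely determined by `𝒱(1,i) ∘ π = 𝒱(r,1)`. -/
theorem right_unit_vs_i {C : Type u} [Category.{v} C] (T : TenData C) (E : HomData C)
    (I : C) (π : ∀ A B D : C, (T.obj A B ⟶ D) ≃ (A ⟶ E.obj B D))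
    (hπ : ∀ {A A' B B' D D' : C} (f : A' ⟶ A) (g : B' ⟶ B) (h : D ⟶ D')
        (k : T.obj A B ⟶ D),
      π A' B' D' (T.map f g ≫ k ≫ h) = f ≫ π A B D k ≫ E.map g h) :
    (∀ r : ∀ A : C, A ⟶ T.obj A I,
      (∀ {A B : C} (f : A ⟶ B), f ≫ r B = r A ≫ T.map f (𝟙 I)) →
      ∃! i : ∀ B : C, E.obj I B ⟶ B,
        (∀ {A B : C} (f : A ⟶ B), E.map (𝟙 I) f ≫ i B = i A ≫ f) ∧
        ∀ (A B : C) (k : T.obj A I ⟶ B), π A I B k ≫ i B = r A ≫ k) ∧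
    (∀ i : ∀ B : C, E.obj I B ⟶ B,
      (∀ {A B : C} (f : A ⟶ B), E.map (𝟙 I) f ≫ i B = i A ≫ f) →
      ∃! r : ∀ A : C, A ⟶ T.obj A I,
        (∀ {A B : C} (f : A ⟶ B), f ≫ r B = r A ≫ T.map f (𝟙 I)) ∧
        ∀ (A B : C) (k : T.obj A I ⟶ B), π A I B k ≫ i B = r A ≫ k) := by
  refine ⟨fun r hr => ?_, fun i hi => ?_⟩
  · refine ⟨_, ⟨isNatHomUnit_comp_adjE hπ hr, areMates_comp_adjE hπ hr⟩, ?_⟩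
    rintro i ⟨-, hmates⟩
    exact funext (AreMates.eq_comp_adjE hmates)
  · refine ⟨_, ⟨isNatRightUnit_adjD_comp hπ hi, areMates_adjD_comp hπ hi⟩, ?_⟩
    rintro r ⟨-, hmates⟩
    exact funext (AreMates.eq_adjD_comp hmates)
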